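/- For every n ≥ 1, every probability distribution p = (p_1, ..., p_n) with p_1 ≥ ... ≥ p_n > 0 and Σ p_i = 1, and every α ∈ (0, 1/2], the guessing entropy satisfies E[G(p)] ≥ (1/e)·2^{H(p) + p_n·h(α)/(1-α)} + 1/2 - p_n·α/(1-α). -/

import Mathlib

/-- Shannon entropy in bits. -/
noncomputable def shannonEntropy {n : ℕ} (p : Fin n → ℝ) : ℝ :=
  -∑ i, p i * Real.logb 2 (p i)

/-- Guessing entropy: expected number of guesses (indices counted from 1). -/
noncomputable def guessingEntropy {n : ℕ} (p : Fin n → ℝ) : ℝ :=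
  ∑ i : Fin n, (((i : ℕ) : ℝ) + 1) * p i

/-- Binary entropy function (in bits). -/
noncomputable def binaryEntropy (α : ℝ) : ℝ :=
  -α * Real.logb 2 α - (1 - α) * Real.logb 2 (1 - α)

/-!
Spread the last mass `p_n` geometrically over the positions `n, n + 1, …`, as `(1 - α) p_n α^k`.
This gives a probability distribution on `ℕ` with entropy `H(p) + p_n h(α) / (1 - α)` and
guessing entropy `G(p) + p_n α / (1 - α)`, so the claim is Rioul's inequality
`G ≥ e^(H - 1) + 1/2` (in nats) for distributions on `ℕ`. That follows from Gibbs' inequality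
against the weights `s⁻¹ e^(-(j + 1/2) / s)` with `s = G - 1/2`, whose total mass
`1 / (2 s sinh (1 / (2 s)))` is at most 1.
-/

open Real Finset

theorem Real.negMulLog_le_neg_mul_log_add_sub {w q : ℝ} (hw : 0 ≤ w) (hq : 0 < q) :
    negMulLog w ≤ -(w * log q) + q - w :=
  calc negMulLog w = w / q * negMulLog q + q * negMulLog (w / q) := by
        rw [← negMulLog_mul, mul_div_cancel₀ _ hq.ne']
    _ ≤ w / q * negMulLog q + q * (1 - w / q) := by
        gcongr; exact negMulLog_le_one_sub_self (by positivity)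
    _ = -(w * log q) + q - w := by rw [negMulLog]; field_simp; ring

theorem Real.hasSum_exp_neg_add_half_mul {t : ℝ} (ht : 0 < t) :
    HasSum (fun j : ℕ => exp (-((j + 1 / 2) * t))) (2 * sinh (t / 2))⁻¹ := by
  have hr : exp (-t) < 1 := exp_lt_one_iff.2 (neg_neg_of_pos ht)
  have h := (hasSum_geometric_of_lt_one (exp_pos _).le hr).mul_left (exp (-(t / 2)))
  have hf : (fun j : ℕ => exp (-((j + 1 / 2) * t))) = fun j => exp (-(t / 2)) * exp (-t) ^ j := by
    ext j
    rw [← exp_nat_mul, ← exp_add]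
    ring_nf
  have hv : (2 * sinh (t / 2))⁻¹ = exp (-(t / 2)) * (1 - exp (-t))⁻¹ := by
    have ha : exp (-(t / 2)) < 1 := exp_lt_one_iff.2 (by linarith)
    have ha0 := exp_pos (-(t / 2))
    rw [sinh_eq, show -t = -(t / 2) + -(t / 2) by ring, exp_add,
      show t / 2 = -(-(t / 2)) by ring, exp_neg (-(t / 2)), neg_neg]
    have : 1 - exp (-(t / 2)) * exp (-(t / 2)) ≠ 0 := by nlinarith
    field_simp
  rwa [hf, hv]

theorem exp_sub_one_add_half_le_of_hasSum {w : ℕ → ℝ} {H G : ℝ} (hw : ∀ j, 0 ≤ w j)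
    (hmass : HasSum w 1) (hH : HasSum (fun j => negMulLog (w j)) H)
    (hG : HasSum (fun j : ℕ => ((j : ℝ) + 1) * w j) G) :
    exp (H - 1) + 1 / 2 ≤ G := by
  have hG1 : 1 ≤ G := hasSum_le (fun j => le_mul_of_one_le_left (hw j) (by simp)) hmass hG
  set s := G - 1 / 2 with hs_def
  have hs : 0 < s := by linarith
  set t := s⁻¹
  have ht : 0 < t := inv_pos.2 hs
  set Q := fun j : ℕ => t * exp (-((j + 1 / 2) * t))
  have hQ : HasSum Q (t * (2 * sinh (t / 2))⁻¹) := (hasSum_exp_neg_add_half_mul ht).mul_left t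
  have hQ1 : t * (2 * sinh (t / 2))⁻¹ ≤ 1 := by
    have := self_le_sinh_iff.2 (half_pos ht).le
    calc t * (2 * sinh (t / 2))⁻¹ ≤ t * t⁻¹ := by gcongr; linarith
      _ = 1 := mul_inv_cancel₀ ht.ne'
  have hbound : ∀ j, negMulLog (w j) ≤
      log s * w j + t * (((j : ℝ) + 1) * w j) - (t / 2 + 1) * w j + Q j := fun j =>
    calc negMulLog (w j) ≤ -(w j * log (Q j)) + Q j - w j :=
          negMulLog_le_neg_mul_log_add_sub (hw j) (by positivity)
      _ = _ := by
          rw [log_mul ht.ne' (exp_pos _).ne', log_exp, log_inv]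
          ring
  have hsum := ((((hmass.mul_left (log s)).add (hG.mul_left t)).sub
    (hmass.mul_left (t / 2 + 1))).add hQ)
  have hHle := hasSum_le hbound hH hsum
  have hts : t * s = 1 := inv_mul_cancel₀ hs.ne'
  have : H - 1 ≤ log s := by rw [hs_def] at hts; linarith
  calc exp (H - 1) + 1 / 2 ≤ exp (log s) + 1 / 2 := by gcongr
    _ = G := by rw [exp_log hs]; ring

section GeometricTail

variable {α : ℝ}

theorem hasSum_mul_geometric (c : ℝ) (hα0 : 0 ≤ α) (hα1 : α < 1) :
    HasSum (fun k : ℕ => (1 - α) * c * α ^ k) c := by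
  have hv : (1 - α) * c * (1 - α)⁻¹ = c := by field_simp [(sub_pos.2 hα1).ne']
  have h := (hasSum_geometric_of_lt_one hα0 hα1).mul_left ((1 - α) * c)
  rwa [hv] at h

theorem hasSum_negMulLog_mul_geometric (c : ℝ) (hα0 : 0 ≤ α) (hα1 : α < 1) :
    HasSum (fun k : ℕ => negMulLog ((1 - α) * c * α ^ k))
      (negMulLog c + c * binEntropy α / (1 - α)) := by
  have hα : ‖α‖ < 1 := by rwa [Real.norm_eq_abs, abs_of_nonneg hα0]
  have hv : negMulLog c + c * binEntropy α / (1 - α) =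
      negMulLog ((1 - α) * c) * (1 - α)⁻¹ + -((1 - α) * c * log α) * (α / (1 - α) ^ 2) := by
    rw [negMulLog_mul, binEntropy_eq_negMulLog_add_negMulLog_one_sub]
    simp only [negMulLog]
    field_simp [(sub_pos.2 hα1).ne']
    ring
  rw [hv]
  refine (((hasSum_geometric_of_lt_one hα0 hα1).mul_left (negMulLog ((1 - α) * c))).add
    ((hasSum_coe_mul_geometric_of_norm_lt_one hα).mul_left _)).congr_fun fun k => ?_
  rw [negMulLog_mul _ (α ^ k)]
  simp only [negMulLog, log_pow]
  ring

theorem hasSum_add_one_mul_mul_geometric (c : ℝ) (m : ℕ) (hα0 : 0 ≤ α) (hα1 : α < 1) :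
    HasSum (fun k : ℕ => (((k + m : ℕ) : ℝ) + 1) * ((1 - α) * c * α ^ k))
      ((m + 1) * c + c * α / (1 - α)) := by
  have hα : ‖α‖ < 1 := by rwa [Real.norm_eq_abs, abs_of_nonneg hα0]
  have hv : c * α / (1 - α) = (1 - α) * c * (α / (1 - α) ^ 2) := by
    field_simp [(sub_pos.2 hα1).ne']
  rw [hv]
  refine ((hasSum_mul_geometric ((m + 1) * c) hα0 hα1).add
    ((hasSum_coe_mul_geometric_of_norm_lt_one hα).mul_left ((1 - α) * c))).congr_fun fun k => ?_
  push_cast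
  ring

end GeometricTail

section GeometricExtension

variable {m : ℕ} {α : ℝ}

def geometricExtension (p : Fin (m + 1) → ℝ) (α : ℝ) (j : ℕ) : ℝ :=
  if h : j < m then p ⟨j, by omega⟩ else (1 - α) * p (Fin.last m) * α ^ (j - m)

theorem hasSum_comp_geometricExtension (p : Fin (m + 1) → ℝ) (φ : ℕ → ℝ → ℝ) {b : ℝ}
    (hb : HasSum (fun k => φ (k + m) ((1 - α) * p (Fin.last m) * α ^ k)) b) :
    HasSum (fun j => φ j (geometricExtension p α j))
      (∑ i : Fin (m + 1), φ i (p i) + (b - φ m (p (Fin.last m)))) := by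
  have hhead : ∑ j ∈ range m, φ j (geometricExtension p α j) =
      ∑ i : Fin m, φ i (p i.castSucc) := by
    rw [← Fin.sum_univ_eq_sum_range]
    refine Finset.sum_congr rfl fun i _ => ?_
    simp only [geometricExtension, i.isLt, dif_pos]
    rfl
  rw [← hasSum_nat_add_iff' m, hhead, Fin.sum_univ_castSucc, Fin.val_last]
  simp only [Fin.val_castSucc, add_assoc, add_sub_cancel, add_sub_cancel_left]
  refine hb.congr_fun fun k => ?_
  simp [geometricExtension]

theorem exp_sub_one_add_half_le_guessingEntropy_add (p : Fin (m + 1) → ℝ)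
    (hp : ∀ i, 0 ≤ p i) (hsum : ∑ i, p i = 1) (hα0 : 0 ≤ α) (hα1 : α < 1) :
    exp (∑ i, negMulLog (p i) + p (Fin.last m) * binEntropy α / (1 - α) - 1) + 1 / 2 ≤
      guessingEntropy p + p (Fin.last m) * α / (1 - α) := by
  have hw : ∀ j, 0 ≤ geometricExtension p α j := fun j => by
    unfold geometricExtension
    split_ifs
    exacts [hp _, mul_nonneg (mul_nonneg (by linarith) (hp _)) (pow_nonneg hα0 _)]
  have hmass := hasSum_comp_geometricExtension p (fun _ x => x)
    (hasSum_mul_geometric (p (Fin.last m)) hα0 hα1)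
  have hH := hasSum_comp_geometricExtension p (fun _ x => negMulLog x)
    (hasSum_negMulLog_mul_geometric (p (Fin.last m)) hα0 hα1)
  have hG := hasSum_comp_geometricExtension p (fun j x => ((j : ℝ) + 1) * x)
    (hasSum_add_one_mul_mul_geometric (p (Fin.last m)) m hα0 hα1)
  rw [hsum, sub_self, add_zero] at hmass
  rw [add_sub_cancel_left] at hH hG
  exact exp_sub_one_add_half_le_of_hasSum hw hmass hH hG

end GeometricExtension

theorem log_two_mul_shannonEntropy {n : ℕ} (p : Fin n → ℝ) :
    log 2 * shannonEntropy p = ∑ i, negMulLog (p i) := by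
  simp only [shannonEntropy, logb, negMulLog, mul_neg, mul_sum]
  rw [← sum_neg_distrib]
  refine sum_congr rfl fun i _ => ?_
  field_simp

theorem log_two_mul_binaryEntropy (α : ℝ) : log 2 * binaryEntropy α = binEntropy α := by
  simp only [binaryEntropy, logb, binEntropy_eq_negMulLog_add_negMulLog_one_sub, negMulLog]
  field_simp
  ring

theorem refined_rioul_limit (n : ℕ) (hn : 1 ≤ n) (p : Fin n → ℝ)
    (hpos : ∀ i, 0 < p i)
    (hsum : ∑ i, p i = 1)
    (α : ℝ) (hα0 : 0 < α) (hα : α ≤ 1/2) :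
    guessingEntropy p ≥
      (1 / Real.exp 1) *
          (2 : ℝ) ^ (shannonEntropy p + p ⟨n - 1, by omega⟩ * binaryEntropy α / (1 - α)) +
        1 / 2 - p ⟨n - 1, by omega⟩ * α / (1 - α) := by
  obtain ⟨m, rfl⟩ : ∃ m, n = m + 1 := ⟨n - 1, by omega⟩
  have key := exp_sub_one_add_half_le_guessingEntropy_add p (fun i => (hpos i).le) hsum hα0.le
    (by linarith)
  have hexp : 1 / exp 1 *
      (2 : ℝ) ^ (shannonEntropy p + p (Fin.last m) * binaryEntropy α / (1 - α)) =
      exp (∑ i, negMulLog (p i) + p (Fin.last m) * binEntropy α / (1 - α) - 1) := by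
    rw [rpow_def_of_pos two_pos, one_div, ← exp_neg, ← exp_add, mul_add,
      log_two_mul_shannonEntropy, ← log_two_mul_binaryEntropy]
    congr 1
    ring
  -- `⟨m + 1 - 1, _⟩` and `Fin.last m` agree by evaluation, but `linarith` needs them syntactic
  change guessingEntropy p ≥ 1 / exp 1 * (2 : ℝ) ^ (shannonEntropy p +
    p (Fin.last m) * binaryEntropy α / (1 - α)) + 1 / 2 - p (Fin.last m) * α / (1 - α)
  linarith
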